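/- For any fixed measurable function g: ℝ^d → ℝ with E[g(X)²] < ∞ and E[Y²] < ∞ such that E[Z(g)Z(g)ᵀ] is invertible, the population OLS coefficient β(g) := (E[Z(g)Z(g)ᵀ])⁻¹ E[Z(g) Y] satisfies α₁ = β₁(g) + β₃(g)·E[g(X)], where α₁ := E[Y | T=1] − E[Y | T=0] is the average treatment effect and β₁(g), β₃(g) are the entries of β(g) corresponding to the regressors T and T·g(X). That is, regardless of the adjustment covariate g, the coefficient on T plus the interaction coefficient times the mean of g(X) equals the ATE. -/

import Mathlib

open MeasureTheory ProbabilityTheory Filter Matrix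
open scoped ENNReal NNReal Topology

noncomputable section

/-- The regression vector `Z(g) = (1, t, g(x), t·g(x))ᵀ` evaluated at `(x, t)`. -/
def Zvec {d : ℕ} (g : (Fin d → ℝ) → ℝ) (x : Fin d → ℝ) (t : ℝ) : Fin 4 → ℝ :=
  ![1, t, g x, t * g x]

/-- The outer product `Z(g) Z(g)ᵀ`. -/
def Zouter {d : ℕ} (g : (Fin d → ℝ) → ℝ) (x : Fin d → ℝ) (t : ℝ) :
    Matrix (Fin 4) (Fin 4) ℝ :=
  vecMulVec (Zvec g x t) (Zvec g x t)

/-- Euclidean norm of a vector in `ℝ^m`. -/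
def vecNorm {m : ℕ} (v : Fin m → ℝ) : ℝ := Real.sqrt (∑ i, v i ^ 2)

/-- The `ℓ² → ℓ²` operator norm of a square matrix. -/
def opNorm {m : ℕ} (M : Matrix (Fin m) (Fin m) ℝ) : ℝ :=
  ‖Matrix.toEuclideanCLM (𝕜 := ℝ) M‖

/-- The minimum eigenvalue of a (symmetric) matrix, via the Rayleigh quotient. -/
def lambdaMin {m : ℕ} (M : Matrix (Fin m) (Fin m) ℝ) : ℝ :=
  sInf {r | ∃ v : Fin m → ℝ, ∑ i, v i ^ 2 = 1 ∧ r = v ⬝ᵥ (M *ᵥ v)}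

variable {Ω : Type*} [MeasurableSpace Ω]

/-- Population Gram matrix `P[Z(g)Z(g)ᵀ]` (entrywise integral). -/
def popGram {d : ℕ} (μ : Measure Ω) (X : Ω → Fin d → ℝ) (T : Ω → ℝ)
    (g : (Fin d → ℝ) → ℝ) : Matrix (Fin 4) (Fin 4) ℝ :=
  Matrix.of fun i j => ∫ ω, Zvec g (X ω) (T ω) i * Zvec g (X ω) (T ω) j ∂μ

/-- Population cross moment `P[Z(g)·Y]` (entrywise integral). -/
def popZY {d : ℕ} (μ : Measure Ω) (Y : Ω → ℝ) (X : Ω → Fin d → ℝ) (T : Ω → ℝ)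
    (g : (Fin d → ℝ) → ℝ) : Fin 4 → ℝ :=
  fun i => ∫ ω, Zvec g (X ω) (T ω) i * Y ω ∂μ

/-- The population OLS coefficient `β(g) = (P[Z(g)Z(g)ᵀ])⁻¹ P[Z(g)Y]`. -/
def betaPop {d : ℕ} (μ : Measure Ω) (Y : Ω → ℝ) (X : Ω → Fin d → ℝ) (T : Ω → ℝ)
    (g : (Fin d → ℝ) → ℝ) : Fin 4 → ℝ :=
  (popGram μ X T g)⁻¹ *ᵥ popZY μ Y X T g

/-- The average treatment effect `α₁ = E[Y | T = 1] − E[Y | T = 0]`. -/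
def ATE (μ : Measure Ω) (Y : Ω → ℝ) (T : Ω → ℝ) : ℝ :=
  (∫ ω, Y ω ∂μ[|{ω | T ω = 1}]) - (∫ ω, Y ω ∂μ[|{ω | T ω = 0}])

/-- The asymptotic variance
`σ² = σ²_{Y_C}/(1−p) + σ²_{Y_T}/p − (σ²_g/(p(1−p)))·[β₂ p + (β₂+β₃)(1−p)]²`. -/
def sigmaSq {d : ℕ} (μ : Measure Ω) (Y : Ω → ℝ) (X : Ω → Fin d → ℝ) (T : Ω → ℝ)
    (g₀ : (Fin d → ℝ) → ℝ) (p : ℝ) : ℝ :=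
  variance Y (μ[|{ω | T ω = 0}]) / (1 - p) + variance Y (μ[|{ω | T ω = 1}]) / p
    - variance (fun ω => g₀ (X ω)) μ / (p * (1 - p)) *
      (betaPop μ Y X T g₀ 2 * p
        + (betaPop μ Y X T g₀ 2 + betaPop μ Y X T g₀ 3) * (1 - p)) ^ 2

/-! Rows 0 and 1 of the normal equations `G β = E[Z Y]` are evaluated using `T ∈ {0, 1}`
(so `T² = T`) and `T ⫫ g(X)` (so `E[T g(X)] = p m` with `p = P(T = 1)`, `m = E[g(X)]`):
`E[Y] = β₀ + p β₁ + m β₂ + p m β₃` and `E[T Y] = p (β₀ + β₁ + m β₂ + m β₃)`.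
Hence `E[Y | T = 1] = E[T Y] / p = β₀ + β₁ + m (β₂ + β₃)` and
`E[Y | T = 0] = (E[Y] - E[T Y]) / (1 - p) = β₀ + m β₂`, whose difference is `β₁ + m β₃`. -/

theorem integral_cond_eq_setIntegral_div (μ : Measure Ω)
    (s : Set Ω) (f : Ω → ℝ) : ∫ ω, f ω ∂μ[|s] = (∫ ω in s, f ω ∂μ) / μ.real s := by
  rw [ProbabilityTheory.cond, integral_smul_measure, smul_eq_mul, measureReal_def,
    ENNReal.toReal_inv, div_eq_inv_mul]

theorem mul_eq_indicator_of_binary {α : Type*} {T : α → ℝ} (hTbin : ∀ ω, T ω = 0 ∨ T ω = 1)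
    (f : α → ℝ) :
    (fun ω => T ω * f ω) = {ω | T ω = 1}.indicator f := by
  funext ω
  rcases hTbin ω with h | h <;> simp [h]

theorem mul_self_of_binary {α : Type*} {T : α → ℝ} (hTbin : ∀ ω, T ω = 0 ∨ T ω = 1) (ω : α) :
    T ω * T ω = T ω := by
  rcases hTbin ω with h | h <;> simp [h]

theorem mul_mul_self_of_binary {α : Type*} {T : α → ℝ} (hTbin : ∀ ω, T ω = 0 ∨ T ω = 1)
    (f : α → ℝ) (ω : α) :
    T ω * (T ω * f ω) = T ω * f ω := by
  rw [← mul_assoc, mul_self_of_binary hTbin]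

section BinaryTreatment

variable {μ : Measure Ω} {T : Ω → ℝ}

theorem integral_mul_eq_setIntegral_of_binary (hT : Measurable T) (hTbin : ∀ ω, T ω = 0 ∨ T ω = 1)
    (f : Ω → ℝ) : ∫ ω, T ω * f ω ∂μ = ∫ ω in {ω | T ω = 1}, f ω ∂μ := by
  have hs : MeasurableSet {ω | T ω = 1} := hT (measurableSet_singleton 1)
  rw [mul_eq_indicator_of_binary hTbin, integral_indicator hs]

theorem integral_eq_measureReal_of_binary (hT : Measurable T) (hTbin : ∀ ω, T ω = 0 ∨ T ω = 1) :
    ∫ ω, T ω ∂μ = μ.real {ω | T ω = 1} := by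
  simpa using integral_mul_eq_setIntegral_of_binary (μ := μ) hT hTbin fun _ => 1

theorem integral_mul_of_indepFun_of_binary [IsFiniteMeasure μ] (hT : Measurable T)
    (hTbin : ∀ ω, T ω = 0 ∨ T ω = 1) {F : Ω → ℝ} (hTF : IndepFun T F μ)
    (hF : AEStronglyMeasurable F μ) :
    ∫ ω, T ω * F ω ∂μ = μ.real {ω | T ω = 1} * ∫ ω, F ω ∂μ := by
  rw [← integral_eq_measureReal_of_binary hT hTbin]
  exact hTF.integral_mul_eq_mul_integral hT.aestronglyMeasurable hF

theorem ATE_eq_of_binary [IsProbabilityMeasure μ] {Y : Ω → ℝ} (hT : Measurable T)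
    (hTbin : ∀ ω, T ω = 0 ∨ T ω = 1) (hY : Integrable Y μ) :
    ATE μ Y T = (∫ ω, T ω * Y ω ∂μ) / μ.real {ω | T ω = 1}
      - ((∫ ω, Y ω ∂μ) - ∫ ω, T ω * Y ω ∂μ) / (1 - μ.real {ω | T ω = 1}) := by
  have hs : MeasurableSet {ω | T ω = 1} := hT (measurableSet_singleton 1)
  have hcompl : {ω | T ω = 0} = {ω | T ω = 1}ᶜ := by
    ext ω; rcases hTbin ω with h | h <;> simp [h]
  rw [ATE, integral_cond_eq_setIntegral_div, integral_cond_eq_setIntegral_div, hcompl,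
    setIntegral_compl hs hY, probReal_compl_eq_one_sub hs,
    integral_mul_eq_setIntegral_of_binary hT hTbin]

end BinaryTreatment

section Regression

variable {d : ℕ} {μ : Measure Ω} {Y : Ω → ℝ}
  {X : Ω → Fin d → ℝ} {T : Ω → ℝ} {g : (Fin d → ℝ) → ℝ}

theorem popGram_mulVec_betaPop (hGram : IsUnit (popGram μ X T g)) :
    popGram μ X T g *ᵥ betaPop μ Y X T g = popZY μ Y X T g := by
  rw [betaPop, mulVec_mulVec,
    mul_nonsing_inv _ ((isUnit_iff_isUnit_det _).mp hGram), one_mulVec]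

theorem popZY_zero : popZY μ Y X T g 0 = ∫ ω, Y ω ∂μ := by
  simp [popZY, Zvec]

theorem popZY_one : popZY μ Y X T g 1 = ∫ ω, T ω * Y ω ∂μ := by
  simp [popZY, Zvec]

variable [IsProbabilityMeasure μ]

theorem popGram_mulVec_zero (hT : Measurable T) (hTbin : ∀ ω, T ω = 0 ∨ T ω = 1)
    (hTg : IndepFun T (fun ω => g (X ω)) μ) (hgX : AEStronglyMeasurable (fun ω => g (X ω)) μ)
    (v : Fin 4 → ℝ) :
    (popGram μ X T g *ᵥ v) 0 = v 0 + μ.real {ω | T ω = 1} * v 1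
      + (∫ ω, g (X ω) ∂μ) * v 2 + μ.real {ω | T ω = 1} * (∫ ω, g (X ω) ∂μ) * v 3 := by
  simp [popGram, Zvec, mulVec, dotProduct, Fin.sum_univ_four,
    integral_eq_measureReal_of_binary hT hTbin,
    integral_mul_of_indepFun_of_binary hT hTbin hTg hgX]

theorem popGram_mulVec_one (hT : Measurable T) (hTbin : ∀ ω, T ω = 0 ∨ T ω = 1)
    (hTg : IndepFun T (fun ω => g (X ω)) μ) (hgX : AEStronglyMeasurable (fun ω => g (X ω)) μ)
    (v : Fin 4 → ℝ) :
    (popGram μ X T g *ᵥ v) 1 = μ.real {ω | T ω = 1}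
      * (v 0 + v 1 + (∫ ω, g (X ω) ∂μ) * v 2 + (∫ ω, g (X ω) ∂μ) * v 3) := by
  simp only [popGram, Zvec, mulVec, dotProduct, Fin.sum_univ_four, of_apply, cons_val,
    mul_one, mul_mul_self_of_binary hTbin (fun ω => g (X ω)), mul_self_of_binary hTbin,
    integral_eq_measureReal_of_binary hT hTbin,
    integral_mul_of_indepFun_of_binary hT hTbin hTg hgX]
  ring

end Regression

theorem mlrate_ate_identity_general {Ω : Type*} [MeasurableSpace Ω] {d : ℕ}
    (μ : Measure Ω) [IsProbabilityMeasure μ]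
    (Y : Ω → ℝ) (X : Ω → Fin d → ℝ) (T : Ω → ℝ)
    (hT : Measurable T)
    (hTbin : ∀ ω, T ω = 0 ∨ T ω = 1)
    (hp0 : 0 < μ {ω | T ω = 1}) (hp1 : μ {ω | T ω = 1} < 1)
    (hTX : IndepFun T X μ)
    (g : (Fin d → ℝ) → ℝ) (hg : Measurable g)
    (hgL2 : MemLp (fun ω => g (X ω)) 2 μ)
    (hYL2 : MemLp Y 2 μ)
    (hGram : IsUnit (popGram μ X T g)) :
    ATE μ Y T = betaPop μ Y X T g 1 + betaPop μ Y X T g 3 * ∫ ω, g (X ω) ∂μ := by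
  have hp_pos : 0 < μ.real {ω | T ω = 1} := ENNReal.toReal_pos hp0.ne' (measure_ne_top μ _)
  have hp_lt_one : μ.real {ω | T ω = 1} < 1 :=
    ENNReal.toReal_lt_of_lt_ofReal (by rwa [ENNReal.ofReal_one])
  have hTg : IndepFun T (fun ω => g (X ω)) μ := hTX.comp measurable_id hg
  have hnormal := popGram_mulVec_betaPop (Y := Y) hGram
  have hrow0 := congrFun hnormal 0
  have hrow1 := congrFun hnormal 1
  rw [popGram_mulVec_zero hT hTbin hTg hgL2.aestronglyMeasurable, popZY_zero] at hrow0
  rw [popGram_mulVec_one hT hTbin hTg hgL2.aestronglyMeasurable, popZY_one] at hrow1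
  rw [ATE_eq_of_binary hT hTbin (hYL2.integrable one_le_two), ← hrow0, ← hrow1]
  field_simp [hp_pos.ne', (sub_pos.mpr hp_lt_one).ne']
  ring

/-- For any fixed square-integrable adjustment covariate `g`, the population OLS
coefficient `β(g) = (E[Z(g)Z(g)ᵀ])⁻¹ E[Z(g)Y]` of the fully interacted regression
satisfies `α₁ = β₁(g) + β₃(g)·E[g(X)]`: the coefficient on `T` plus the
interaction coefficient times the mean of `g(X)` equals the ATE, regardless of
the adjustment covariate. -/
theorem mlrate_ate_identity {Ω : Type*} [MeasurableSpace Ω] {d : ℕ}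
    (μ : Measure Ω) [IsProbabilityMeasure μ]
    (Y : Ω → ℝ) (X : Ω → Fin d → ℝ) (T : Ω → ℝ)
    (hY : Measurable Y) (hX : Measurable X) (hT : Measurable T)
    (hTbin : ∀ ω, T ω = 0 ∨ T ω = 1)
    (hp0 : 0 < μ {ω | T ω = 1}) (hp1 : μ {ω | T ω = 1} < 1)
    (hTX : IndepFun T X μ)
    (g : (Fin d → ℝ) → ℝ) (hg : Measurable g)
    (hgL2 : MemLp (fun ω => g (X ω)) 2 μ)
    (hYL2 : MemLp Y 2 μ)
    (hGram : IsUnit (popGram μ X T g)) :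
    ATE μ Y T = betaPop μ Y X T g 1 + betaPop μ Y X T g 3 * ∫ ω, g (X ω) ∂μ :=
  mlrate_ate_identity_general μ Y X T hT hTbin hp0 hp1 hTX g hg hgL2 hYL2 hGram
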